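/- For every r ≥ 0 and u ≥ 0, ₁F₁(r+1/2, 1/2; u) ≥ e^u. Consequently, for all τ > 0, r ≥ 0 and z ∈ ℝ, the two-sided z Bayes factor satisfies BF₁₀(z|τ²,r) = (1+τ²)^{−(r+1/2)} ₁F₁(r+1/2, 1/2; τ²z²/(2(1+τ²))) ≥ (1+τ²)^{−(r+1/2)} · exp(τ²z²/(2(1+τ²))). -/
import Mathlib


open Real MeasureTheory Filter

/-- Rising factorial (Pochhammer symbol) `(a)_k`. -/
noncomputable def risingFac (a : ℝ) (k : ℕ) : ℝ := (ascPochhammer ℝ k).eval a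

/-- Confluent hypergeometric function `₁F₁(a, b; x)`. -/
noncomputable def oneF1 (a b x : ℝ) : ℝ :=
  ∑' k : ℕ, (risingFac a k / risingFac b k) * x ^ k / (Nat.factorial k : ℝ)

/-- Two-sided `z` Bayes factor `BF₁₀(z | τ², r)` as a function of `τ² = τsq`. -/
noncomputable def BF10z (z τsq r : ℝ) : ℝ :=
  (1 + τsq) ^ (-(r + 1 / 2)) *
    oneF1 (r + 1 / 2) (1 / 2) (τsq * z ^ 2 / (2 * (1 + τsq)))

lemma risingFac_succ (a : ℝ) (k : ℕ) :
    risingFac a (k + 1) = risingFac a k * (a + k) := by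
  simp [risingFac, ascPochhammer_succ_right]

lemma risingFac_pos {a : ℝ} (ha : 0 < a) (k : ℕ) : 0 < risingFac a k := by
  induction k with
  | zero => simp [risingFac]
  | succ n ih =>
    rw [risingFac_succ]
    exact mul_pos ih (by positivity)

lemma risingFac_mono {a b : ℝ} (hb : 0 < b) (hab : b ≤ a) (k : ℕ) :
    risingFac b k ≤ risingFac a k := by
  induction k with
  | zero => simp [risingFac]
  | succ n ih =>
    rw [risingFac_succ, risingFac_succ]
    have h1 : (0:ℝ) ≤ b + n := by positivity
    exact mul_le_mul ih (by linarith) h1 ((risingFac_pos (lt_of_lt_of_le hb hab) n).le)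

lemma risingFac_upper {r : ℝ} (hr : 0 ≤ r) (k : ℕ) :
    risingFac (r + 1 / 2) k ≤ (1 + 2 * r) ^ k * risingFac (1 / 2) k := by
  induction k with
  | zero => simp [risingFac]
  | succ n ih =>
    rw [risingFac_succ, risingFac_succ, pow_succ]
    have h1 : (0:ℝ) ≤ r + 1 / 2 + n := by positivity
    have h2 : r + 1 / 2 + n ≤ (1 + 2 * r) * (1 / 2 + n) := by nlinarith [Nat.cast_nonneg (α := ℝ) n]
    calc risingFac (r + 1 / 2) n * (r + 1 / 2 + ↑n)
        ≤ ((1 + 2 * r) ^ n * risingFac (1 / 2) n) * ((1 + 2 * r) * (1 / 2 + n)) := by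
          exact mul_le_mul ih h2 h1
            (mul_nonneg (by positivity) (risingFac_pos (by norm_num) n).le)
      _ = (1 + 2 * r) ^ n * (1 + 2 * r) * (risingFac (1 / 2) n * (1 / 2 + ↑n)) := by ring

/-- Exponential lower bound for `₁F₁(r + 1/2, 1/2; u)` and the resulting lower bound
for the two-sided `z` Bayes factor. -/
theorem oneF1_ge_exp_and_BF_lower_bound :
    (∀ r u : ℝ, 0 ≤ r → 0 ≤ u → Real.exp u ≤ oneF1 (r + 1 / 2) (1 / 2) u) ∧
    (∀ τ r z : ℝ, 0 < τ → 0 ≤ r →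
      (1 + τ ^ 2) ^ (-(r + 1 / 2)) * Real.exp (τ ^ 2 * z ^ 2 / (2 * (1 + τ ^ 2)))
        ≤ BF10z z (τ ^ 2) r) := by
  have main : ∀ r u : ℝ, 0 ≤ r → 0 ≤ u → Real.exp u ≤ oneF1 (r + 1 / 2) (1 / 2) u := by
    intro r u hr hu
    have hb : (0:ℝ) < 1 / 2 := by norm_num
    have hab : (1:ℝ) / 2 ≤ r + 1 / 2 := by linarith
    set f : ℕ → ℝ := fun k =>
      risingFac (r + 1 / 2) k / risingFac (1 / 2) k * u ^ k / (Nat.factorial k : ℝ) with hf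
    have hle : ∀ k, u ^ k / (Nat.factorial k : ℝ) ≤ f k := by
      intro k
      have h1 : (1:ℝ) ≤ risingFac (r + 1 / 2) k / risingFac (1 / 2) k :=
        (one_le_div (risingFac_pos hb k)).2 (risingFac_mono hb hab k)
      have : u ^ k ≤ risingFac (r + 1 / 2) k / risingFac (1 / 2) k * u ^ k := by
        nlinarith [pow_nonneg hu k]
      exact div_le_div_of_nonneg_right this (by positivity) |>.trans_eq rfl
    have hub : ∀ k, f k ≤ ((1 + 2 * r) * u) ^ k / (Nat.factorial k : ℝ) := by
      intro k
      have h2 : risingFac (r + 1 / 2) k / risingFac (1 / 2) k ≤ (1 + 2 * r) ^ k :=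
        (div_le_iff₀ (risingFac_pos hb k)).2 (risingFac_upper hr k)
      have : risingFac (r + 1 / 2) k / risingFac (1 / 2) k * u ^ k ≤ ((1 + 2 * r) * u) ^ k := by
        rw [mul_pow]
        exact mul_le_mul_of_nonneg_right h2 (pow_nonneg hu k)
      exact div_le_div_of_nonneg_right this (by positivity)
    have hfpos : ∀ k, 0 ≤ f k := by
      intro k
      have := risingFac_pos hb k
      have := risingFac_pos (lt_of_lt_of_le hb hab) k
      positivity
    have hsum : Summable f :=
      Summable.of_nonneg_of_le hfpos hub (Real.summable_pow_div_factorial _)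
    have hexp : Real.exp u = ∑' k : ℕ, u ^ k / (Nat.factorial k : ℝ) := by
      rw [Real.exp_eq_exp_ℝ, NormedSpace.exp_eq_tsum_div]
    rw [hexp]
    exact Summable.tsum_le_tsum hle (Real.summable_pow_div_factorial u) hsum
  refine ⟨main, fun τ r z hτ hr => ?_⟩
  have hτ2 : (0:ℝ) < 1 + τ ^ 2 := by positivity
  have hu : (0:ℝ) ≤ τ ^ 2 * z ^ 2 / (2 * (1 + τ ^ 2)) := by positivity
  have h := main r _ hr hu
  unfold BF10z
  have hpow : (0:ℝ) < (1 + τ ^ 2) ^ (-(r + 1 / 2)) := Real.rpow_pos_of_pos hτ2 _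
  exact mul_le_mul_of_nonneg_left h hpow.le
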